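/- arXiv:2110.08804 — 2 statements merged into one kernel-verified Lean document; each statement's English description precedes it below -/
import Mathlib

section
/- Let π: O(G) → O(H) be a surjective Hopf algebra morphism with O(G/H) = O(H\G) = k. Then for every right O(G)-comodule V the space of O(G)-invariant vectors coincides with the space of O(H)-invariant vectors of the corestricted comodule, and the restriction (corestriction) functor from finite-dimensional right O(G)-comodules to finite-dimensional right O(H)-comodules is full: every O(H)-comodule map between finite-dimensional O(G)-comodules is an O(G)-comodule map. -/
/- Common infrastructure: right comodules over coalgebras, simplicity,
cosemisimplicity, subcoalgebras, adjoint coactions, normality, etc. -/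

open TensorProduct

universe u

namespace QG

variable (k : Type u) [Field k]

section Coalg

variable (C : Type u) [AddCommGroup C] [Module k C] [Coalgebra k C]

/-- `ρ : V →ₗ[k] V ⊗[k] C` is a (coassociative, counital) right coaction. -/
structure IsComod {V : Type u} [AddCommGroup V] [Module k V]
    (ρ : V →ₗ[k] V ⊗[k] C) : Prop where
  coassoc : ∀ v : V, ρ.rTensor C (ρ v) =
    (TensorProduct.assoc k V C C).symm.toLinearMap
      ((Coalgebra.comul (R := k) (A := C)).lTensor V (ρ v))
  counit : ∀ v : V, (TensorProduct.rid k V)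
      ((Coalgebra.counit (R := k) (A := C)).lTensor V (ρ v)) = v

/-- A submodule `U ≤ V` is a subcomodule if the coaction restricts to it,
i.e. maps `U` into the image of `U ⊗ C` in `V ⊗ C`. -/
def IsSubcomod {V : Type u} [AddCommGroup V] [Module k V]
    (ρ : V →ₗ[k] V ⊗[k] C) (U : Submodule k V) : Prop :=
  ∀ u ∈ U, ρ u ∈ LinearMap.range ((U.subtype).rTensor C)

/-- A simple subcomodule: a nonzero subcomodule with no nonzero proper
subcomodules below it. -/
def IsSimpleSubcomod {V : Type u} [AddCommGroup V] [Module k V]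
    (ρ : V →ₗ[k] V ⊗[k] C) (U : Submodule k V) : Prop :=
  IsSubcomod k C ρ U ∧ U ≠ ⊥ ∧
    ∀ U' : Submodule k V, U' ≤ U → IsSubcomod k C ρ U' → U' = ⊥ ∨ U' = U

/-- A comodule is simple if it is simple as a subcomodule of itself. -/
def IsSimpleComod {V : Type u} [AddCommGroup V] [Module k V]
    (ρ : V →ₗ[k] V ⊗[k] C) : Prop :=
  IsSimpleSubcomod k C ρ ⊤

/-- Morphisms of right `C`-comodules. -/
def IsComodHom {V W : Type u} [AddCommGroup V] [Module k V]
    [AddCommGroup W] [Module k W]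
    (ρV : V →ₗ[k] V ⊗[k] C) (ρW : W →ₗ[k] W ⊗[k] C) (f : V →ₗ[k] W) : Prop :=
  ρW ∘ₗ f = (f.rTensor C) ∘ₗ ρV

/-- `C` is cosemisimple: every right `C`-comodule is an (internal) direct sum
of simple subcomodules. -/
def IsCosemisimple : Prop :=
  ∀ (V : Type u) [AddCommGroup V] [Module k V]
    (ρ : V →ₗ[k] V ⊗[k] C), IsComod k C ρ →
    ∃ (ι : Type u) (U : ι → Submodule k V),
      (∀ i, IsSimpleSubcomod k C ρ (U i)) ∧
      iSupIndep U ∧ (⨆ i, U i) = ⊤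

/-- Subcoalgebras of `C`, as submodules. -/
def IsSubcoalgebra (D : Submodule k C) : Prop :=
  ∀ x ∈ D, Coalgebra.comul (R := k) x ∈
    LinearMap.range (TensorProduct.map D.subtype D.subtype)

/-- Simple subcoalgebras: nonzero ones with no nonzero proper subcoalgebras. -/
def IsSimpleSubcoalgebra (D : Submodule k C) : Prop :=
  IsSubcoalgebra k C D ∧ D ≠ ⊥ ∧
    ∀ D' : Submodule k C, D' ≤ D → IsSubcoalgebra k C D' → D' = ⊥ ∨ D' = D

/-- The coefficient space of a comodule: the smallest submodule `D ≤ C` such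
that the coaction factors through `V ⊗ D`.  For a simple comodule this is its
coefficient coalgebra. -/
def coeffSpace {V : Type u} [AddCommGroup V] [Module k V]
    (ρ : V →ₗ[k] V ⊗[k] C) : Submodule k C :=
  sInf {D : Submodule k C | ∀ v : V, ρ v ∈ LinearMap.range ((D.subtype).lTensor V)}

/-- Corestriction of a coaction along a linear map of coalgebras `π : C → D`. -/
noncomputable def cores {D : Type u} [AddCommGroup D] [Module k D]
    {V : Type u} [AddCommGroup V] [Module k V]
    (π : C →ₗ[k] D) (ρ : V →ₗ[k] V ⊗[k] C) : V →ₗ[k] V ⊗[k] D :=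
  (π.lTensor V) ∘ₗ ρ

end Coalg

section Bialg

variable (H : Type u) [Ring H] [Bialgebra k H]

/-- An invariant vector for a coaction of a bialgebra. -/
def IsInvariant {V : Type u} [AddCommGroup V] [Module k V]
    (ρ : V →ₗ[k] V ⊗[k] H) (v : V) : Prop :=
  ρ v = v ⊗ₜ[k] (1 : H)

/-- The tensor product coaction on `V ⊗ W` for a bialgebra `H`:
`v ⊗ w ↦ (v₀ ⊗ w₀) ⊗ v₁w₁`. -/
noncomputable def tensorCoact {V W : Type u}
    [AddCommGroup V] [Module k V] [AddCommGroup W] [Module k W]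
    (ρV : V →ₗ[k] V ⊗[k] H) (ρW : W →ₗ[k] W ⊗[k] H) :
    (V ⊗[k] W) →ₗ[k] (V ⊗[k] W) ⊗[k] H :=
  ((LinearMap.mul' k H).lTensor (V ⊗[k] W)) ∘ₗ
    (TensorProduct.tensorTensorTensorComm k V H W H).toLinearMap ∘ₗ
    (TensorProduct.map ρV ρW)

/-- `O(G/H)`: the right coinvariants `{x | (id ⊗ π)Δ(x) = x ⊗ 1}` of a
quotient map `π`. -/
noncomputable def quotientSpaceLeft {B : Type u} [AddCommGroup B] [Module k B] [One B]
    (π : H →ₗ[k] B) : Submodule k H :=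
  LinearMap.ker ((π.lTensor H) ∘ₗ (Coalgebra.comul (R := k) (A := H)) -
    (TensorProduct.mk k H B).flip 1)

/-- `O(H\G)`: the left coinvariants `{x | (π ⊗ id)Δ(x) = 1 ⊗ x}`. -/
noncomputable def quotientSpaceRight {B : Type u} [AddCommGroup B] [Module k B] [One B]
    (π : H →ₗ[k] B) : Submodule k H :=
  LinearMap.ker ((π.rTensor H) ∘ₗ (Coalgebra.comul (R := k) (A := H)) -
    (TensorProduct.mk k B H) 1)

end Bialg

section Hopf

variable (H : Type u) [Ring H] [HopfAlgebra k H]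

/-- Iterated comultiplication `x ↦ x₁ ⊗ (x₂ ⊗ x₃)`. -/
noncomputable def comul2 : H →ₗ[k] H ⊗[k] (H ⊗[k] H) :=
  ((Coalgebra.comul (R := k) (A := H)).lTensor H) ∘ₗ (Coalgebra.comul (R := k) (A := H))

/-- The right adjoint coaction `x ↦ x₂ ⊗ S(x₁)x₃`. -/
noncomputable def adR : H →ₗ[k] H ⊗[k] H :=
  ((LinearMap.mul' k H).lTensor H) ∘ₗ
    (TensorProduct.assoc k H H H).toLinearMap ∘ₗ
    (((TensorProduct.comm k H H).toLinearMap).rTensor H) ∘ₗ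
    (TensorProduct.assoc k H H H).symm.toLinearMap ∘ₗ
    ((HopfAlgebra.antipode (R := k) (A := H)).rTensor (H ⊗[k] H)) ∘ₗ
    comul2 k H

/-- The left adjoint coaction `x ↦ x₁S(x₃) ⊗ x₂` (a left coaction, with the
coacting tensorand on the left). -/
noncomputable def adL : H →ₗ[k] H ⊗[k] H :=
  ((LinearMap.mul' k H).rTensor H) ∘ₗ
    (TensorProduct.assoc k H H H).symm.toLinearMap ∘ₗ
    (((TensorProduct.comm k H H).toLinearMap).lTensor H) ∘ₗ
    (((HopfAlgebra.antipode (R := k) (A := H)).lTensor H).lTensor H) ∘ₗ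
    comul2 k H

variable {B : Type u} [AddCommGroup B] [Module k B]

/-- `π : O(G) → O(H)` is right-normal: it is a morphism of right
`O(G)`-comodules for the right adjoint coaction, i.e. the right adjoint
coaction descends along `π`. -/
def IsRightNormal (π : H →ₗ[k] B) : Prop :=
  ∃ ρ : B →ₗ[k] B ⊗[k] H, ρ ∘ₗ π = (π.rTensor H) ∘ₗ adR k H

/-- `π : O(G) → O(H)` is left-normal: the left adjoint coaction descends
along `π`. -/
def IsLeftNormal (π : H →ₗ[k] B) : Prop :=
  ∃ lam : B →ₗ[k] H ⊗[k] B, lam ∘ₗ π = (π.lTensor H) ∘ₗ adL k H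

end Hopf

end QG

namespace QG

variable (k : Type u) [Field k]

section Coalg2

variable (C : Type u) [AddCommGroup C] [Module k C] [Coalgebra k C]

/-- A bundled simple right `C`-comodule. -/
structure SimpleComodule where
  V : Type u
  [addCommGroup : AddCommGroup V]
  [module : Module k V]
  ρ : V →ₗ[k] V ⊗[k] C
  isComod : IsComod k C ρ
  isSimple : IsSimpleComod k C ρ

attribute [instance] SimpleComodule.addCommGroup SimpleComodule.module

/-- A simple comodule `(T, ρT)` is a constituent of a comodule `(V, ρV)`
(over a cosemisimple coalgebra) iff there is a nonzero comodule map `T → V`. -/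
def IsConstituent {T V : Type u} [AddCommGroup T] [Module k T]
    [AddCommGroup V] [Module k V]
    (ρT : T →ₗ[k] T ⊗[k] C) (ρV : V →ₗ[k] V ⊗[k] C) : Prop :=
  ∃ f : T →ₗ[k] V, f ≠ 0 ∧ IsComodHom k C ρT ρV f

/-- Isomorphism of (simple) comodules. -/
def comodIsoRel (X Y : SimpleComodule k C) : Prop :=
  ∃ e : X.V ≃ₗ[k] Y.V, IsComodHom k C X.ρ Y.ρ e.toLinearMap

/-- The set `Ĉ` of isomorphism classes of simple right `C`-comodules. -/
def SimpleComodQuot := Quot (comodIsoRel k C)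

/-- The isomorphism class of a simple comodule. -/
def SimpleComodule.cls (X : SimpleComodule k C) : SimpleComodQuot k C :=
  Quot.mk _ X

/-- Group-like elements of a coalgebra; these correspond to the
one-dimensional comodules, i.e. to characters. -/
def IsGroupLike (a : C) : Prop :=
  Coalgebra.counit (R := k) (A := C) a = (1 : k) ∧
    Coalgebra.comul (R := k) (A := C) a = a ⊗ₜ[k] a

/-- A linear map `φ : C → Z` out of a coalgebra is central if
`φ(x₁) ⊗ x₂ = φ(x₂) ⊗ x₁`. -/
def IsCentralMap {Z : Type u} [AddCommGroup Z] [Module k Z] (φ : C →ₗ[k] Z) : Prop :=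
  (φ.rTensor C) ∘ₗ (Coalgebra.comul (R := k) (A := C)) =
    (φ.rTensor C) ∘ₗ (TensorProduct.comm k C C).toLinearMap ∘ₗ
      (Coalgebra.comul (R := k) (A := C))

/-- The simple comodule `X` has "central character" `g` with respect to the
quotient map `γ : C → Z`: corestricted along `γ`, the coaction on `X` is a sum
of copies of the character `g`. -/
def HasCentralChar {Z : Type u} [AddCommGroup Z] [Module k Z]
    (γ : C →ₗ[k] Z) (X : SimpleComodule k C) (g : Z) : Prop :=
  ∀ v : X.V, cores k C γ X.ρ v = v ⊗ₜ[k] g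

end Coalg2

/-- The k-span of the set of products `g * a`, `a ∈ Am`; for `Am` a submodule
this is the left ideal generated by `Am`. -/
def leftIdealGen {G : Type u} [Ring G] [Module k G] (Am : Submodule k G) :
    Submodule k G :=
  Submodule.span k {x : G | ∃ g : G, ∃ a ∈ Am, x = g * a}

end QG


namespace QGAux
open TensorProduct
variable {k : Type u} [Field k]

section Coef
variable {V : Type*} [AddCommGroup V] [Module k V]
variable {ι : Type*} [Fintype ι] [DecidableEq ι]
variable {M : Type*} [AddCommGroup M] [Module k M]

/-- Coefficient extraction from `V ⊗ M` along a basis of `V`. -/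
noncomputable def coefAux (b : Module.Basis ι k V) (j : ι) : V ⊗[k] M →ₗ[k] M :=
  (TensorProduct.lid k M).toLinearMap ∘ₗ (b.coord j).rTensor M

lemma coefAux_tmul (b : Module.Basis ι k V) (j : ι) (v : V) (m : M) :
    coefAux b j (v ⊗ₜ[k] m) = b.repr v j • m := by
  simp [coefAux, Module.Basis.coord_apply]

lemma sum_coefAux (b : Module.Basis ι k V) (t : V ⊗[k] M) :
    ∑ j, b j ⊗ₜ[k] coefAux b j t = t := by
  induction t using TensorProduct.induction_on with
  | zero => simp
  | tmul v m =>
    simp_rw [coefAux_tmul, tmul_smul, smul_tmul', ← sum_tmul]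
    rw [Module.Basis.sum_repr]
  | add x y hx hy =>
    simp only [map_add, tmul_add, Finset.sum_add_distrib, hx, hy]

lemma coefAux_sum_tmul (b : Module.Basis ι k V) (s : ι → M) (j : ι) :
    coefAux b j (∑ l, b l ⊗ₜ[k] s l) = s j := by
  rw [map_sum]
  simp_rw [coefAux_tmul, Module.Basis.repr_self, Finsupp.single_apply]
  simp [Finset.sum_ite_eq]

lemma eq_of_sum_tmul_eq {b : Module.Basis ι k V} {s s' : ι → M}
    (h : ∑ l, b l ⊗ₜ[k] s l = ∑ l, b l ⊗ₜ[k] s' l) : ∀ j, s j = s' j := by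
  intro j
  have := congrArg (coefAux b j) h
  rwa [coefAux_sum_tmul, coefAux_sum_tmul] at this

lemma smul_sum_tmul_swap {κ : Type*} [Fintype κ]
    (v : κ → V) (x : κ → ι → M) (F : ι → k) :
    ∑ α, F α • (∑ β, v β ⊗ₜ[k] x β α) = ∑ β, v β ⊗ₜ[k] (∑ α, F α • x β α) := by
  simp_rw [Finset.smul_sum, tmul_sum, tmul_smul]
  exact Finset.sum_comm

lemma sum_smul_tmul_swap {κ : Type*} [Fintype κ]
    (v : κ → V) (x : ι → M) (F : κ → ι → k) :
    ∑ j, (∑ β, F β j • v β) ⊗ₜ[k] x j = ∑ β, v β ⊗ₜ[k] (∑ j, F β j • x j) := by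
  have h1 : ∀ j, (∑ β, F β j • v β) ⊗ₜ[k] x j = ∑ β, F β j • (v β ⊗ₜ[k] x j) := by
    intro j; rw [sum_tmul]; simp_rw [← smul_tmul']
  have h2 : ∀ β, v β ⊗ₜ[k] (∑ j, F β j • x j) = ∑ j, F β j • (v β ⊗ₜ[k] x j) := by
    intro β; rw [tmul_sum]; simp_rw [tmul_smul]
  simp_rw [h1, h2]
  exact Finset.sum_comm

end Coef

section Coeff
variable {C : Type u} [AddCommGroup C] [Module k C] [Coalgebra k C]
variable {V : Type u} [AddCommGroup V] [Module k V]
variable {n : ℕ}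

/-- Matrix coefficients of a comodule with respect to a basis. -/
noncomputable def comodCoeff (b : Module.Basis (Fin n) k V) (ρ : V →ₗ[k] V ⊗[k] C)
    (j i : Fin n) : C :=
  coefAux (M := C) b j (ρ (b i))

lemma comodCoeff_expand (b : Module.Basis (Fin n) k V) (ρ : V →ₗ[k] V ⊗[k] C) (i : Fin n) :
    ρ (b i) = ∑ j, b j ⊗ₜ[k] comodCoeff b ρ j i :=
  (sum_coefAux b _).symm

lemma comodCoeff_comul (b : Module.Basis (Fin n) k V) (ρ : V →ₗ[k] V ⊗[k] C)
    (hρ : QG.IsComod k C ρ) (j i : Fin n) :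
    Coalgebra.comul (R := k) (comodCoeff b ρ j i)
      = ∑ l, comodCoeff b ρ j l ⊗ₜ[k] comodCoeff b ρ l i := by
  have h2 : (TensorProduct.assoc k V C C) (ρ.rTensor C (ρ (b i))) =
      (Coalgebra.comul (R := k) (A := C)).lTensor V (ρ (b i)) := by
    rw [hρ.coassoc (b i)]; simp
  have hLs : (TensorProduct.assoc k V C C) (ρ.rTensor C (ρ (b i)))
      = ∑ l, b l ⊗ₜ[k] (∑ j', comodCoeff b ρ l j' ⊗ₜ[k] comodCoeff b ρ j' i) := by
    conv_lhs => rw [comodCoeff_expand b ρ i]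
    rw [map_sum, map_sum]
    simp_rw [LinearMap.rTensor_tmul, comodCoeff_expand b ρ, sum_tmul, map_sum,
      assoc_tmul]
    rw [Finset.sum_comm]
    simp_rw [← tmul_sum]
  have hRs : (Coalgebra.comul (R := k) (A := C)).lTensor V (ρ (b i))
      = ∑ l, b l ⊗ₜ[k] Coalgebra.comul (R := k) (comodCoeff b ρ l i) := by
    conv_lhs => rw [comodCoeff_expand b ρ i]
    rw [map_sum]
    simp_rw [LinearMap.lTensor_tmul]
  rw [hLs, hRs] at h2
  exact (eq_of_sum_tmul_eq h2 j).symm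

lemma comodCoeff_counit (b : Module.Basis (Fin n) k V) (ρ : V →ₗ[k] V ⊗[k] C)
    (hρ : QG.IsComod k C ρ) (j i : Fin n) :
    Coalgebra.counit (R := k) (comodCoeff b ρ j i) = if i = j then (1:k) else 0 := by
  have hcu := hρ.counit (b i)
  rw [comodCoeff_expand b ρ i, map_sum, map_sum] at hcu
  simp_rw [LinearMap.lTensor_tmul, TensorProduct.rid_tmul] at hcu
  have := congrArg (fun w => b.repr w j) hcu
  simp only [map_sum, map_smul, Module.Basis.repr_self] at this
  simp only [Finset.sum_apply', Finsupp.smul_apply, Finsupp.single_apply,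
    smul_eq_mul, mul_ite, mul_one, mul_zero] at this
  rwa [Finset.sum_ite_eq' Finset.univ j
    (fun j' => Coalgebra.counit (R := k) (comodCoeff b ρ j' i)),
    if_pos (Finset.mem_univ j)] at this

end Coeff

open QG
variable {k : Type u} [Field k]

lemma part1 {G H : Type u} [Ring G] [HopfAlgebra k G] [Ring H] [HopfAlgebra k H]
    (π' : G →ₗ[k] H) (hπ1 : π' 1 = 1)
    (hL : QG.quotientSpaceLeft k G π' = Submodule.span k {(1 : G)})
    (V : Type u) [AddCommGroup V] [Module k V] (ρ : V →ₗ[k] V ⊗[k] G)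
    (hρ : QG.IsComod k G ρ) (v : V) :
    QG.IsInvariant k G ρ v ↔ QG.IsInvariant k H (QG.cores k G π' ρ) v := by
  constructor
  · intro h
    unfold QG.IsInvariant QG.cores at *
    rw [LinearMap.comp_apply, h]
    simp [hπ1]
  · intro h
    have h' : (π'.lTensor V) (ρ v) = v ⊗ₜ[k] (1 : H) := h
    set L : G →ₗ[k] G ⊗[k] H :=
      (π'.lTensor G) ∘ₗ (Coalgebra.comul (R := k) (A := G)) -
        (TensorProduct.mk k G H).flip 1 with hLdef
    have hker : LinearMap.ker L = LinearMap.range (LinearMap.toSpanSingleton k G 1) := by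
      rw [show LinearMap.ker L = QG.quotientSpaceLeft k G π' from rfl, hL,
        ← LinearMap.span_singleton_eq_range]
    have hex : Function.Exact (LinearMap.toSpanSingleton k G 1) L :=
      LinearMap.exact_iff.mpr hker
    have hex2 := Module.Flat.lTensor_exact (M := V) hex
    -- key computation : (L.lTensor V) (ρ v) = 0
    have h0 : (L.lTensor V) (ρ v) = 0 := by
      rw [hLdef, LinearMap.lTensor_sub, LinearMap.sub_apply, sub_eq_zero,
        LinearMap.lTensor_comp, LinearMap.comp_apply]
      have hco : (Coalgebra.comul (R := k) (A := G)).lTensor V (ρ v) =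
          (TensorProduct.assoc k V G G) (ρ.rTensor G (ρ v)) := by
        rw [hρ.coassoc v]; simp
      rw [hco]
      -- move π' inside: (π'.lTensor G).lTensor V ∘ assoc = assoc ∘ π'.lTensor (V ⊗ G)
      have hmaps : ((π'.lTensor G).lTensor V) ∘ₗ (TensorProduct.assoc k V G G).toLinearMap =
          (TensorProduct.assoc k V G H).toLinearMap ∘ₗ (π'.lTensor (V ⊗[k] G)) := by
        apply TensorProduct.ext_threefold
        intro x y z
        simp
      have := LinearMap.congr_fun hmaps (ρ.rTensor G (ρ v))
      simp only [LinearMap.comp_apply, LinearEquiv.coe_coe] at this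
      rw [this]
      have hswap : (π'.lTensor (V ⊗[k] G)) (ρ.rTensor G (ρ v)) =
          ρ.rTensor H ((π'.lTensor V) (ρ v)) := by
        have hc : π'.lTensor (V ⊗[k] G) ∘ₗ ρ.rTensor G = ρ.rTensor H ∘ₗ π'.lTensor V := by
          rw [LinearMap.lTensor_comp_rTensor, LinearMap.rTensor_comp_lTensor]
        exact LinearMap.congr_fun hc (ρ v)
      rw [hswap, h']
      have : ρ.rTensor H (v ⊗ₜ[k] (1 : H)) = (ρ v) ⊗ₜ[k] (1 : H) := by simp
      rw [this]
      -- assoc (t ⊗ 1) = (mk.flip 1).lTensor V t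
      induction ρ v using TensorProduct.induction_on with
      | zero => simp
      | tmul a x => simp
      | add x y hx hy => simp only [add_tmul, map_add, hx, hy]
    have hval : ∀ t : V ⊗[k] k, ((LinearMap.toSpanSingleton k G 1).lTensor V) t =
        (TensorProduct.rid k V t) ⊗ₜ[k] (1 : G) := by
      intro t
      induction t using TensorProduct.induction_on with
      | zero => simp
      | tmul a c => simp [LinearMap.toSpanSingleton_apply, tmul_smul, smul_tmul']
      | add x y hx hy => simp only [map_add, hx, hy, add_tmul]
    obtain ⟨t, ht⟩ := (hex2 (ρ v)).mp h0
    rw [hval t] at ht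
    have hcu := hρ.counit v
    rw [← ht] at hcu
    simp only [LinearMap.lTensor_tmul, Bialgebra.counit_one, TensorProduct.rid_tmul,
      one_smul] at hcu
    show ρ v = v ⊗ₜ[k] (1 : G)
    rw [← ht, hcu]

lemma comul_antipode_matrix {G : Type u} [Ring G] [HopfAlgebra k G]
    {n : ℕ} (g : Fin n → Fin n → G)
    (hΔ : ∀ j i, Coalgebra.comul (R := k) (g j i) = ∑ l, g j l ⊗ₜ[k] g l i)
    (h1 : ∀ j i, ∑ l, HopfAlgebra.antipode (R := k) (g j l) * g l i
        = if i = j then 1 else 0)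
    (h2 : ∀ j i, ∑ l, g j l * HopfAlgebra.antipode (R := k) (g l i)
        = if i = j then 1 else 0) :
    ∀ l i, Coalgebra.comul (R := k) (HopfAlgebra.antipode (R := k) (g l i)) =
      ∑ j, HopfAlgebra.antipode (R := k) (g j i) ⊗ₜ[k]
        HopfAlgebra.antipode (R := k) (g l j) := by
  classical
  set S : G →ₗ[k] G := HopfAlgebra.antipode (R := k) (A := G)
  let gm : Matrix (Fin n) (Fin n) G := Matrix.of g
  let sm : Matrix (Fin n) (Fin n) G := Matrix.of fun j i => S (g j i)
  have hsg : sm * gm = 1 := by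
    ext j i
    simp only [Matrix.mul_apply, Matrix.one_apply, sm, gm, Matrix.of_apply]
    rw [h1 j i]
    by_cases hji : i = j <;> by_cases hji' : j = i <;> simp_all
  have hgs : gm * sm = 1 := by
    ext j i
    simp only [Matrix.mul_apply, Matrix.one_apply, sm, gm, Matrix.of_apply]
    rw [h2 j i]
    by_cases hji : i = j <;> by_cases hji' : j = i <;> simp_all
  let iL : G →+* G ⊗[k] G := (Algebra.TensorProduct.includeLeft (R := k) (S := k)
    (A := G) (B := G)).toRingHom
  let iR : G →+* G ⊗[k] G := (Algebra.TensorProduct.includeRight (R := k)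
    (A := G) (B := G)).toRingHom
  let Dm : Matrix (Fin n) (Fin n) G →+* Matrix (Fin n) (Fin n) (G ⊗[k] G) :=
    (Bialgebra.comulAlgHom k G).toRingHom.mapMatrix
  have hDg : Dm gm = gm.map iL * gm.map iR := by
    ext j i
    simp only [Dm, RingHom.mapMatrix_apply, Matrix.map_apply, Matrix.mul_apply,
      Matrix.of_apply, gm]
    rw [show ((Bialgebra.comulAlgHom k G).toRingHom (g j i) : G ⊗[k] G)
      = Coalgebra.comul (R := k) (g j i) from rfl, hΔ j i]
    congr 1
    ext l
    simp [iL, iR, Algebra.TensorProduct.tmul_mul_tmul]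
  have hleft : Dm sm * Dm gm = 1 := by rw [← map_mul, hsg, map_one]
  have hright : Dm gm * (sm.map iR * sm.map iL) = 1 := by
    rw [hDg, mul_assoc, ← mul_assoc (gm.map iR), ← Matrix.map_mul, hgs]
    have : (1 : Matrix (Fin n) (Fin n) G).map iR = 1 := Matrix.map_one _ (map_zero iR) (map_one iR)
    rw [this, one_mul, ← Matrix.map_mul, hgs, Matrix.map_one _ (map_zero iL) (map_one iL)]
  have huniq : Dm sm = sm.map iR * sm.map iL := left_inv_eq_right_inv hleft hright
  intro l i
  have := Matrix.ext_iff.mpr huniq l i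
  simp only [Dm, RingHom.mapMatrix_apply, Matrix.map_apply, Matrix.mul_apply,
    Matrix.of_apply, sm] at this
  rw [show ((Bialgebra.comulAlgHom k G).toRingHom (S (g l i)) : G ⊗[k] G)
    = Coalgebra.comul (R := k) (S (g l i)) from rfl] at this
  rw [this]
  congr 1
  ext j
  simp [iL, iR, Algebra.TensorProduct.tmul_mul_tmul]

lemma key_matrix {G H : Type u} [Ring G] [HopfAlgebra k G] [Ring H] [HopfAlgebra k H]
    (π' : G →ₗ[k] H) (hπ1 : π' 1 = 1) (hπmul : ∀ x y : G, π' (x * y) = π' x * π' y)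
    (hL : QG.quotientSpaceLeft k G π' = Submodule.span k {(1 : G)})
    {m n : ℕ} (hh : Fin m → Fin m → G) (gg : Fin n → Fin n → G) (F : Fin m → Fin n → k)
    (hch : ∀ β α, Coalgebra.comul (R := k) (hh β α) = ∑ γ, hh β γ ⊗ₜ[k] hh γ α)
    (hcg : ∀ j i, Coalgebra.comul (R := k) (gg j i) = ∑ l, gg j l ⊗ₜ[k] gg l i)
    (hεh : ∀ β α, Coalgebra.counit (R := k) (hh β α) = if α = β then (1:k) else 0)
    (hεg : ∀ j i, Coalgebra.counit (R := k) (gg j i) = if i = j then (1:k) else 0)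
    (hπM : ∀ β i, π' ((∑ α, F α i • hh β α) - ∑ j, F β j • gg j i) = 0) :
    ∀ β i, (∑ α, F α i • hh β α) = ∑ j, F β j • gg j i := by
  classical
  intro β₀ i₀
  rw [← sub_eq_zero]
  set S : G →ₗ[k] G := HopfAlgebra.antipode (R := k) (A := G) with hS
  set M : Fin m → Fin n → G :=
    fun β i => (∑ α, F α i • hh β α) - (∑ j, F β j • gg j i) with hM
  show M β₀ i₀ = 0
  have hgS1 : ∀ j i, ∑ l, S (gg j l) * gg l i = if i = j then (1:G) else 0 := by
    intro j i
    have h0 := HopfAlgebra.mul_antipode_rTensor_comul_apply (R := k) (a := gg j i)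
    rw [hcg] at h0
    simp only [map_sum, LinearMap.rTensor_tmul, LinearMap.mul'_apply] at h0
    rw [show (∑ l, S (gg j l) * gg l i) = ∑ l,
      (HopfAlgebra.antipode (R := k)) (gg j l) * gg l i from rfl, h0, hεg]
    split <;> simp
  have hgS2 : ∀ j i, ∑ l, gg j l * S (gg l i) = if i = j then (1:G) else 0 := by
    intro j i
    have h0 := HopfAlgebra.mul_antipode_lTensor_comul_apply (R := k) (a := gg j i)
    rw [hcg] at h0
    simp only [map_sum, LinearMap.lTensor_tmul, LinearMap.mul'_apply] at h0
    rw [show (∑ l, gg j l * S (gg l i)) = ∑ l,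
      gg j l * (HopfAlgebra.antipode (R := k)) (gg l i) from rfl, h0, hεg]
    split <;> simp
  have hΔS : ∀ l i, Coalgebra.comul (R := k) (S (gg l i)) =
      ∑ j, S (gg j i) ⊗ₜ[k] S (gg l j) := comul_antipode_matrix gg hcg hgS1 hgS2
  have hΔM : ∀ β i, Coalgebra.comul (R := k) (M β i) =
      (∑ γ, hh β γ ⊗ₜ[k] M γ i) + (∑ j, M β j ⊗ₜ[k] gg j i) := by
    intro β i
    have e1 : Coalgebra.comul (R := k) (∑ α, F α i • hh β α)
        = ∑ γ, ∑ α, F α i • (hh β γ ⊗ₜ[k] hh γ α) := by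
      rw [map_sum]
      simp_rw [map_smul, hch, Finset.smul_sum]
      rw [Finset.sum_comm]
    have e2 : Coalgebra.comul (R := k) (∑ j, F β j • gg j i)
        = ∑ j, ∑ l, F β j • (gg j l ⊗ₜ[k] gg l i) := by
      rw [map_sum]
      simp_rw [map_smul, hcg, Finset.smul_sum]
    have e3 : (∑ γ, hh β γ ⊗ₜ[k] M γ i)
        = (∑ γ, ∑ α, F α i • (hh β γ ⊗ₜ[k] hh γ α))
          - (∑ γ, ∑ j, F γ j • (hh β γ ⊗ₜ[k] gg j i)) := by
      simp only [hM, tmul_sub, tmul_sum, tmul_smul]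
      rw [Finset.sum_sub_distrib]
    have e4 : (∑ j, M β j ⊗ₜ[k] gg j i)
        = (∑ j, ∑ α, F α j • (hh β α ⊗ₜ[k] gg j i))
          - (∑ j, ∑ l, F β l • (gg l j ⊗ₜ[k] gg j i)) := by
      simp only [hM, sub_tmul, sum_tmul, ← smul_tmul']
      rw [Finset.sum_sub_distrib]
    have e5 : (∑ γ, ∑ j, F γ j • (hh β γ ⊗ₜ[k] gg j i))
        = (∑ j, ∑ α, F α j • (hh β α ⊗ₜ[k] gg j i)) := Finset.sum_comm
    calc Coalgebra.comul (R := k) (M β i)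
        = (∑ γ, ∑ α, F α i • (hh β γ ⊗ₜ[k] hh γ α))
          - (∑ j, ∑ l, F β j • (gg j l ⊗ₜ[k] gg l i)) := by
          simp only [hM, map_sub]; rw [e1, e2]
      _ = ((∑ γ, ∑ α, F α i • (hh β γ ⊗ₜ[k] hh γ α))
            - (∑ γ, ∑ j, F γ j • (hh β γ ⊗ₜ[k] gg j i)))
          + ((∑ γ, ∑ j, F γ j • (hh β γ ⊗ₜ[k] gg j i))
            - (∑ j, ∑ l, F β j • (gg j l ⊗ₜ[k] gg l i))) := by
          rw [sub_add_sub_cancel]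
      _ = (∑ γ, hh β γ ⊗ₜ[k] M γ i) + (∑ j, M β j ⊗ₜ[k] gg j i) := by
          rw [e3, e4, e5]
          have e6 : (∑ j, ∑ l, F β l • (gg l j ⊗ₜ[k] gg j i))
              = (∑ j, ∑ l, F β j • (gg j l ⊗ₜ[k] gg l i)) := Finset.sum_comm
          rw [e6]
  set N : Fin m → Fin n → G := fun β i => ∑ l, M β l * S (gg l i) with hN
  have hΔN : ∀ β i, Coalgebra.comul (R := k) (N β i) =
      (∑ γ, ∑ j, ∑ l, (hh β γ * S (gg j i)) ⊗ₜ[k] (M γ l * S (gg l j)))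
        + N β i ⊗ₜ[k] (1 : G) := by
    intro β i
    show Coalgebra.comul (R := k) (∑ l, M β l * S (gg l i)) = _
    rw [map_sum]
    simp_rw [Bialgebra.comul_mul, hΔM, hΔS, add_mul, Finset.sum_mul_sum,
      Algebra.TensorProduct.tmul_mul_tmul]
    rw [Finset.sum_add_distrib]
    congr 1
    · exact Finset.sum_comm.trans (Finset.sum_congr rfl fun γ _ => Finset.sum_comm)
    · rw [Finset.sum_comm]
      have inner2 : ∀ c : Fin n,
          ∑ l, ∑ j, (M β c * S (gg j i)) ⊗ₜ[k] (gg c l * S (gg l j))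
            = (M β c * S (gg c i)) ⊗ₜ[k] (1 : G) := by
        intro c
        rw [Finset.sum_comm]
        have inner : ∀ j, ∑ l, (M β c * S (gg j i)) ⊗ₜ[k] (gg c l * S (gg l j))
            = (M β c * S (gg j i)) ⊗ₜ[k] (if j = c then (1:G) else 0) := by
          intro j; rw [← tmul_sum, hgS2]
        simp_rw [inner]
        rw [Finset.sum_eq_single c (fun j _ hne => by rw [if_neg hne, tmul_zero])
          (by simp)]
        rw [if_pos rfl]
      simp_rw [inner2]
      rw [← sum_tmul]
  have hπN : ∀ γ l, π' (M γ l) = 0 := fun γ l => hπM γ l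
  have hLN0 : ∀ β i, N β i ∈ QG.quotientSpaceLeft k G π' := by
    intro β i
    show ((π'.lTensor G) ∘ₗ (Coalgebra.comul (R := k) (A := G)) -
      (TensorProduct.mk k G H).flip 1) (N β i) = 0
    rw [LinearMap.sub_apply, sub_eq_zero, LinearMap.comp_apply, hΔN, map_add]
    have hT : (π'.lTensor G)
        (∑ γ, ∑ j, ∑ l, (hh β γ * S (gg j i)) ⊗ₜ[k] (M γ l * S (gg l j))) = 0 := by
      rw [map_sum]
      refine Finset.sum_eq_zero fun γ _ => ?_
      rw [map_sum]
      refine Finset.sum_eq_zero fun j _ => ?_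
      rw [map_sum]
      refine Finset.sum_eq_zero fun l _ => ?_
      rw [LinearMap.lTensor_tmul, hπmul, hπN, zero_mul, tmul_zero]
    rw [hT, zero_add, LinearMap.lTensor_tmul, hπ1]
    rfl
  have hεM : ∀ β i, Coalgebra.counit (R := k) (M β i) = 0 := by
    intro β i
    simp only [hM, map_sub, map_sum, map_smul, hεh, hεg]
    rw [sub_eq_zero]
    simp [smul_eq_mul, mul_ite, mul_one, mul_zero, Finset.sum_ite_eq, Finset.sum_ite_eq']
  have hN0 : ∀ β i, N β i = 0 := by
    intro β i
    have hmem := hLN0 β i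
    rw [hL, Submodule.mem_span_singleton] at hmem
    obtain ⟨a, ha⟩ := hmem
    have hε : Coalgebra.counit (R := k) (N β i) = 0 := by
      show Coalgebra.counit (R := k) (∑ l, M β l * S (gg l i)) = 0
      rw [map_sum]
      refine Finset.sum_eq_zero fun l _ => ?_
      rw [Bialgebra.counit_mul, hεM, zero_mul]
    rw [← ha] at hε ⊢
    rw [map_smul, Bialgebra.counit_one, smul_eq_mul, mul_one] at hε
    rw [hε, zero_smul]
  have hMN : ∑ j, N β₀ j * gg j i₀ = M β₀ i₀ := by
    simp only [hN]
    simp_rw [Finset.sum_mul, mul_assoc]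
    rw [Finset.sum_comm]
    have inner : ∀ l, ∑ j, M β₀ l * (S (gg l j) * gg j i₀)
        = M β₀ l * (if i₀ = l then (1:G) else 0) := by
      intro l; rw [← Finset.mul_sum, hgS1]
    simp_rw [inner, mul_ite, mul_one, mul_zero]
    rw [Finset.sum_ite_eq]
    simp
  rw [← hMN]
  refine Finset.sum_eq_zero fun j _ => ?_
  rw [hN0, zero_mul]


lemma part2 {G H : Type u} [Ring G] [HopfAlgebra k G] [Ring H] [HopfAlgebra k H]
    (π' : G →ₗ[k] H) (hπ1 : π' 1 = 1) (hπmul : ∀ x y : G, π' (x * y) = π' x * π' y)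
    (hL : QG.quotientSpaceLeft k G π' = Submodule.span k {(1 : G)})
    (V W : Type u) [AddCommGroup V] [Module k V] [FiniteDimensional k V]
    [AddCommGroup W] [Module k W] [FiniteDimensional k W]
    (ρV : V →ₗ[k] V ⊗[k] G) (ρW : W →ₗ[k] W ⊗[k] G)
    (hV : QG.IsComod k G ρV) (hW : QG.IsComod k G ρW) (f : V →ₗ[k] W)
    (hf : QG.IsComodHom k H (QG.cores k G π' ρV) (QG.cores k G π' ρW) f) :
    QG.IsComodHom k G ρV ρW f := by
  classical
  let b := Module.finBasis k V
  let c := Module.finBasis k W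
  let gg := comodCoeff b ρV
  let hh := comodCoeff c ρW
  let F : Fin (Module.finrank k W) → Fin (Module.finrank k V) → k :=
    fun β i => c.repr (f (b i)) β
  have hfb : ∀ i, f (b i) = ∑ β, F β i • c β := fun i => (c.sum_repr (f (b i))).symm
  have hπM : ∀ β i, π' ((∑ α, F α i • hh β α) - ∑ j, F β j • gg j i) = 0 := by
    intro β i
    rw [map_sub, sub_eq_zero, map_sum, map_sum]
    simp_rw [map_smul]
    have happ := LinearMap.congr_fun hf (b i)
    simp only [QG.IsComodHom, QG.cores] at happ
    rw [LinearMap.comp_apply, LinearMap.comp_apply, LinearMap.comp_apply,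
      LinearMap.comp_apply] at happ
    rw [hfb i, map_sum] at happ
    simp_rw [map_smul] at happ
    rw [map_sum] at happ
    simp_rw [map_smul, comodCoeff_expand c ρW, map_sum, LinearMap.lTensor_tmul] at happ
    rw [smul_sum_tmul_swap] at happ
    rw [comodCoeff_expand b ρV i, map_sum] at happ
    simp_rw [LinearMap.lTensor_tmul] at happ
    rw [map_sum] at happ
    simp_rw [LinearMap.rTensor_tmul, hfb] at happ
    rw [sum_smul_tmul_swap] at happ
    exact eq_of_sum_tmul_eq happ β
  have hmain := key_matrix π' hπ1 hπmul hL hh gg F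
    (fun β α => comodCoeff_comul c ρW hW β α)
    (fun j i => comodCoeff_comul b ρV hV j i)
    (fun β α => comodCoeff_counit c ρW hW β α)
    (fun j i => comodCoeff_counit b ρV hV j i) hπM
  show ρW ∘ₗ f = (f.rTensor G) ∘ₗ ρV
  apply Module.Basis.ext b
  intro i
  rw [LinearMap.comp_apply, LinearMap.comp_apply]
  rw [hfb i, map_sum]
  simp_rw [map_smul, comodCoeff_expand c ρW]
  rw [smul_sum_tmul_swap]
  rw [comodCoeff_expand b ρV i, map_sum]
  simp_rw [LinearMap.rTensor_tmul, hfb]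
  rw [sum_smul_tmul_swap]
  exact Finset.sum_congr rfl fun β _ => by rw [hmain β i]

end QGAux

open QG HopfAlgebra in
/-- If `π : O(G) → O(H)` is a surjective Hopf algebra map
with `O(G/H) = O(H\G) = k`, then for every right `O(G)`-comodule the
`O(G)`-invariants coincide with the `O(H)`-invariants of the corestriction,
and the restriction functor on finite-dimensional comodules is full. -/
theorem statement_6 (k : Type u) [Field k] [IsAlgClosed k]
    (G H : Type u) [Ring G] [HopfAlgebra k G] [Ring H] [HopfAlgebra k H]
    (π : G →ₐc[k] H) (hsurj : Function.Surjective π)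
    (hL : quotientSpaceLeft k G (π : G →ₗ[k] H) = Submodule.span k {(1 : G)})
    (hR : quotientSpaceRight k G (π : G →ₗ[k] H) = Submodule.span k {(1 : G)}) :
    (∀ (V : Type u) [AddCommGroup V] [Module k V] (ρ : V →ₗ[k] V ⊗[k] G),
      IsComod k G ρ → ∀ v : V,
        IsInvariant k G ρ v ↔ IsInvariant k H (cores k G (π : G →ₗ[k] H) ρ) v) ∧
    (∀ (V W : Type u) [AddCommGroup V] [Module k V] [FiniteDimensional k V]
      [AddCommGroup W] [Module k W] [FiniteDimensional k W]
      (ρV : V →ₗ[k] V ⊗[k] G) (ρW : W →ₗ[k] W ⊗[k] G),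
      IsComod k G ρV → IsComod k G ρW → ∀ f : V →ₗ[k] W,
        IsComodHom k H (cores k G (π : G →ₗ[k] H) ρV)
          (cores k G (π : G →ₗ[k] H) ρW) f →
        IsComodHom k G ρV ρW f) := by
  constructor
  · intro V _ _ ρ hρ v
    exact QGAux.part1 (π : G →ₗ[k] H) (by simp) hL V ρ hρ v
  · intro V W _ _ _ _ _ _ ρV ρW hV hW f hf
    exact QGAux.part2 (π : G →ₗ[k] H) (by simp) (fun x y => by simp) hL
      V W ρV ρW hV hW f hf
end

section
/- Let H ≤ G be an embedding of linearly reductive quantum groups with relative center Z(G,H) := Z(G) ∩ H. If U, V, W ∈ Ĝ satisfy hom_H(U, V⊗W) ≠ 0, then the central character of U and the product of the central characters of V and W agree upon restriction to Z(G,H). Consequently the assignment g_V ↦ (central character of V restricted to Z(G,H)) defines a group homomorphism can: C(G,H) → Ẑ(G,H). -/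
/- Common infrastructure: right comodules over coalgebras, simplicity,
cosemisimplicity, subcoalgebras, adjoint coactions, normality, etc. -/

open TensorProduct

universe u

namespace QG

variable (k : Type u) [Field k]
variable (G Hh : Type u) [Ring G] [HopfAlgebra k G] [Ring Hh] [HopfAlgebra k Hh]

/-- The defining relators of the relative chain group `C(G,H)`: one relator
`g_U (g_V g_W)⁻¹` whenever `hom_H(U, V ⊗ W) ≠ 0`, i.e. whenever the
restrictions to `H` of `U` and `V ⊗ W` are not disjoint. -/
noncomputable def chainRels (π : G →ₐc[k] Hh) :
    Set (FreeGroup (SimpleComodQuot k G)) :=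
  {r | ∃ U V W : SimpleComodule k G,
    (∃ f : U.V →ₗ[k] V.V ⊗[k] W.V, f ≠ 0 ∧
      IsComodHom k Hh (cores k G (π : G →ₗ[k] Hh) U.ρ)
        (cores k G (π : G →ₗ[k] Hh) (tensorCoact k G V.ρ W.ρ)) f) ∧
    r = FreeGroup.of U.cls * (FreeGroup.of V.cls * FreeGroup.of W.cls)⁻¹}

/-- The relative chain group `C(G,H)`: generators `g_V`, `V ∈ Ĝ`, and
relations `g_U = g_V g_W` whenever `U` and `V ⊗ W` are not disjoint over `H`. -/
noncomputable def ChainGroup (π : G →ₐc[k] Hh) : Type (u + 1) :=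
  PresentedGroup (chainRels k G Hh π)

noncomputable instance (π : G →ₐc[k] Hh) : Group (ChainGroup k G Hh π) :=
  inferInstanceAs (Group (PresentedGroup (chainRels k G Hh π)))

/-- The generator `g_V` of the chain group attached to `V ∈ Ĝ`. -/
noncomputable def chainGen (π : G →ₐc[k] Hh) (x : SimpleComodQuot k G) :
    ChainGroup k G Hh π :=
  PresentedGroup.of x

end QG





namespace QGAux

variable {k : Type u} [Field k]
variable {M N P Q S : Type u} [AddCommGroup M] [Module k M] [AddCommGroup N] [Module k N]
  [AddCommGroup P] [Module k P] [AddCommGroup Q] [Module k Q] [AddCommGroup S] [Module k S]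

/-- Contraction of the right tensor factor with a functional. -/
noncomputable def ctrR (φ : N →ₗ[k] k) : M ⊗[k] N →ₗ[k] M :=
  (TensorProduct.rid k M).toLinearMap ∘ₗ φ.lTensor M

@[simp] lemma ctrR_tmul (φ : N →ₗ[k] k) (m : M) (n : N) :
    ctrR φ (m ⊗ₜ[k] n) = φ n • m := by
  simp [ctrR]

/-- Contraction of the left tensor factor with a functional. -/
noncomputable def ctrL (φ : M →ₗ[k] k) : M ⊗[k] N →ₗ[k] N :=
  (TensorProduct.lid k N).toLinearMap ∘ₗ φ.rTensor N

@[simp] lemma ctrL_tmul (φ : M →ₗ[k] k) (m : M) (n : N) :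
    ctrL φ (m ⊗ₜ[k] n) = φ m • n := by
  simp [ctrL]

lemma map_ctrR (f : M →ₗ[k] P) (φ : N →ₗ[k] k) (t : M ⊗[k] N) :
    f (ctrR φ t) = ctrR φ (f.rTensor N t) := by
  induction t with
  | zero => simp
  | tmul m n => simp
  | add x y hx hy => simp [hx, hy]

lemma ctrR_lTensor (f : N →ₗ[k] P) (φ : P →ₗ[k] k) (t : M ⊗[k] N) :
    ctrR φ (f.lTensor M t) = ctrR (φ ∘ₗ f) t := by
  induction t with
  | zero => simp
  | tmul m n => simp
  | add x y hx hy => simp [hx, hy]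

lemma ctrL_rTensor (f : M →ₗ[k] P) (ψ : P →ₗ[k] k) (t : M ⊗[k] N) :
    ctrL ψ (f.rTensor N t) = ctrL (ψ ∘ₗ f) t := by
  induction t with
  | zero => simp
  | tmul m n => simp
  | add x y hx hy => simp [hx, hy]

lemma ctrL_comm (φ : N →ₗ[k] k) (t : M ⊗[k] N) :
    ctrL φ (TensorProduct.comm k M N t) = ctrR φ t := by
  induction t with
  | zero => simp
  | tmul m n => simp
  | add x y hx hy => simp [hx, hy]

lemma ctrR_assoc_symm (φ : P →ₗ[k] k) (t : M ⊗[k] (N ⊗[k] P)) :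
    ctrR φ ((TensorProduct.assoc k M N P).symm t) =
      LinearMap.lTensor M (ctrR φ) t := by
  induction t with
  | zero => simp
  | tmul m np =>
    induction np with
    | zero => simp
    | tmul n p => simp
    | add x y hx hy => simp [tmul_add, hx, hy]
  | add x y hx hy => simp [hx, hy]

lemma ctrL_lTensor_assoc (φ : N →ₗ[k] k) (t : (M ⊗[k] N) ⊗[k] P) :
    LinearMap.lTensor M (ctrL φ) (TensorProduct.assoc k M N P t) =
      LinearMap.rTensor P (ctrR φ) t := by
  induction t with
  | zero => simp
  | tmul mn p =>
    induction mn with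
    | zero => simp
    | tmul m n => simp [smul_tmul]
    | add x y hx hy => simp [add_tmul, hx, hy]
  | add x y hx hy => simp [hx, hy]

lemma dual_ctrR (φ : M →ₗ[k] k) (ψ : N →ₗ[k] k) (t : M ⊗[k] N) :
    φ (ctrR ψ t) = ψ (ctrL φ t) := by
  induction t with
  | zero => simp
  | tmul m n => simp [mul_comm]
  | add x y hx hy => simp [hx, hy]

lemma map_lTensor_assoc (f : N →ₗ[k] Q) (g : P →ₗ[k] S) (t : (M ⊗[k] N) ⊗[k] P) :
    LinearMap.lTensor M (TensorProduct.map f g) (TensorProduct.assoc k M N P t) =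
      TensorProduct.assoc k M Q S (TensorProduct.map (f.lTensor M) g t) := by
  induction t with
  | zero => simp
  | tmul mn p =>
    induction mn with
    | zero => simp
    | tmul m n => simp
    | add x y hx hy => simp [add_tmul, hx, hy]
  | add x y hx hy => simp [hx, hy]

section coords

variable {ι : Type u} [DecidableEq ι]

/-- Coordinates of a tensor with respect to a basis of the right factor. -/
noncomputable def coords (b : Module.Basis ι k N) : M ⊗[k] N ≃ₗ[k] (ι →₀ M) :=
  (LinearEquiv.lTensor M b.repr).trans (TensorProduct.finsuppScalarRight k k M ι)

lemma coords_apply (b : Module.Basis ι k N) (t : M ⊗[k] N) (i : ι) :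
    coords b t i = ctrR (b.coord i) t := by
  induction t with
  | zero => simp [coords]
  | tmul m n => simp [coords, TensorProduct.finsuppScalarRight_apply_tmul_apply,
      Module.Basis.coord_apply]
  | add x y hx hy => simp [coords, map_add, Finsupp.add_apply] at hx hy ⊢; rw [hx, hy]

lemma coords_tmul_basis (b : Module.Basis ι k N) (m : M) (i : ι) :
    coords b (m ⊗ₜ[k] b i) = Finsupp.single i m := by
  ext j
  rw [coords_apply, ctrR_tmul, Module.Basis.coord_apply, b.repr_self,
    Finsupp.single_apply, Finsupp.single_apply]
  split <;> simp

lemma coords_reconstruct (b : Module.Basis ι k N) (t : M ⊗[k] N) :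
    t = (coords b t).sum fun i m => m ⊗ₜ[k] b i := by
  apply (coords b).injective
  rw [map_finsuppSum]
  have : ((coords b t).sum fun i m => coords b (m ⊗ₜ[k] b i)) =
      ((coords b t).sum fun i m => Finsupp.single i m) :=
    Finsupp.sum_congr fun i _ => coords_tmul_basis b _ i
  rw [this, Finsupp.sum_single]

end coords

lemma eq_zero_of_forall_ctrR (t : M ⊗[k] N)
    (h : ∀ φ : N →ₗ[k] k, ctrR φ t = 0) : t = 0 := by
  classical
  let b := Module.Basis.ofVectorSpace k N
  apply (coords b).injective
  ext i
  simp only [map_zero, Finsupp.coe_zero, Pi.zero_apply]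
  rw [coords_apply]
  exact h _

lemma tmul_left_cancel {m : M} (hm : m ≠ 0) {n n' : N}
    (h : m ⊗ₜ[k] n = m ⊗ₜ[k] n') : n = n' := by
  obtain ⟨φ, hφ⟩ : ∃ φ : Module.Dual k M, φ m ≠ 0 := by
    by_contra hc
    push_neg at hc
    exact hm ((Module.forall_dual_apply_eq_zero_iff k m).1 hc)
  have := congrArg (ctrL φ) h
  rw [ctrL_tmul, ctrL_tmul] at this
  exact smul_right_injective _ hφ this

lemma mem_range_rTensor_subtype {ι : Type u} [DecidableEq ι] (U : Submodule k M) (b : Module.Basis ι k N)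
    (t : M ⊗[k] N) :
    t ∈ LinearMap.range (U.subtype.rTensor N) ↔ ∀ i, ctrR (b.coord i) t ∈ U := by
  constructor
  · rintro ⟨s, rfl⟩ i
    rw [← map_ctrR]
    exact (ctrR (b.coord i) s).2
  · intro h
    set g : ι →₀ U :=
      ⟨(coords b t).support, fun i => ⟨coords b t i, by rw [coords_apply]; exact h i⟩,
        by intro i; simp [Finsupp.mem_support_iff, Subtype.ext_iff]⟩
    refine ⟨(coords b).symm g, ?_⟩
    apply (coords b).injective
    ext i
    rw [coords_apply, ← map_ctrR, ← coords_apply, (coords b).apply_symm_apply]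
    rfl

lemma ctrR_mem_span_coords {ι : Type u} [DecidableEq ι] [DecidableEq M] (b : Module.Basis ι k N) (t : M ⊗[k] N)
    (φ : N →ₗ[k] k) :
    ctrR φ t ∈ Submodule.span k
      (((coords b t).support.image fun i => coords b t i : Finset M) : Set M) := by
  have ht : ctrR φ t = (coords b t).sum fun i m => φ (b i) • m := by
    conv_lhs => rw [coords_reconstruct b t]
    rw [map_finsuppSum]
    exact Finsupp.sum_congr fun i _ => ctrR_tmul _ _ _
  rw [ht, Finsupp.sum]
  apply Submodule.sum_mem
  intro i hi
  exact Submodule.smul_mem _ _ (Submodule.subset_span (Finset.mem_image_of_mem _ hi))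

end QGAux


namespace QGAux

variable {k : Type u} [Field k]
variable {G : Type u} [AddCommGroup G] [Module k G] [Coalgebra k G]
variable {X : Type u} [AddCommGroup X] [Module k X] {ρ : X →ₗ[k] X ⊗[k] G}

lemma exists_ne_zero (hs : QG.IsSimpleComod k G ρ) : ∃ v : X, v ≠ 0 := by
  by_contra h
  push_neg at h
  apply hs.2.1
  ext v
  simp [Submodule.mem_bot, h v]

lemma rho_ctrR (hc : QG.IsComod k G ρ) (φ : G →ₗ[k] k) (v : X) :
    ρ (ctrR φ (ρ v)) =
      LinearMap.lTensor X (ctrR (M := G) φ ∘ₗ Coalgebra.comul (R := k)) (ρ v) := by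
  rw [map_ctrR, hc.coassoc v]
  have h1 : ((TensorProduct.assoc k X G G).symm.toLinearMap)
      ((Coalgebra.comul (R := k) (A := G)).lTensor X (ρ v)) =
      (TensorProduct.assoc k X G G).symm
      ((Coalgebra.comul (R := k) (A := G)).lTensor X (ρ v)) := rfl
  rw [h1, ctrR_assoc_symm, ← LinearMap.lTensor_comp_apply]

lemma finiteDimensional_of_simple (hc : QG.IsComod k G ρ) (hs : QG.IsSimpleComod k G ρ) :
    FiniteDimensional k X := by
  classical
  obtain ⟨v₀, hv₀⟩ := exists_ne_zero hs
  set b := Module.Basis.ofVectorSpace k G with hb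
  set t := ρ v₀ with ht
  set s : Finset X := (coords b t).support.image fun i => coords b t i with hsdef
  set U : Submodule k X := Submodule.span k (s : Set X) with hU
  have hFD : FiniteDimensional k U := FiniteDimensional.span_of_finite k s.finite_toSet
  have hv0U : v₀ ∈ U := by
    have h1 : ctrR (Coalgebra.counit (R := k) (A := G)) t = v₀ := hc.counit v₀
    rw [← h1]
    exact ctrR_mem_span_coords b t _
  have hsub : QG.IsSubcomod k G ρ U := by
    have hle : U ≤ (LinearMap.range (U.subtype.rTensor G)).comap ρ := by
      rw [hU, Submodule.span_le]
      rintro x hx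
      obtain ⟨j, hj, rfl⟩ := Finset.mem_image.1 (Finset.mem_coe.1 hx)
      show coords b t j ∈ Submodule.comap ρ (LinearMap.range (U.subtype.rTensor G))
      rw [Submodule.mem_comap, mem_range_rTensor_subtype U b]
      intro i
      rw [coords_apply, ht, rho_ctrR hc, ctrR_lTensor]
      exact ctrR_mem_span_coords b t _
    exact fun u hu => hle hu
  rcases hs.2.2 U le_top hsub with h | h
  · rw [h, Submodule.mem_bot] at hv0U
    exact absurd hv0U hv₀
  · haveI : FiniteDimensional k (⊤ : Submodule k X) := h ▸ hFD
    exact Module.Finite.equiv (Submodule.topEquiv)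

lemma isSubcomod_ker {Y : Type u} [AddCommGroup Y] [Module k Y] {ρY : Y →ₗ[k] Y ⊗[k] G}
    {f : X →ₗ[k] Y} (hf : QG.IsComodHom k G ρ ρY f) :
    QG.IsSubcomod k G ρ (LinearMap.ker f) := by
  classical
  intro u hu
  rw [LinearMap.mem_ker] at hu
  rw [mem_range_rTensor_subtype _ (Module.Basis.ofVectorSpace k G)]
  intro i
  have h2 : f.rTensor G (ρ u) = ρY (f u) := (LinearMap.congr_fun hf u).symm
  rw [LinearMap.mem_ker, map_ctrR, h2, hu, map_zero, map_zero]

lemma schur_scalar [IsAlgClosed k] (hc : QG.IsComod k G ρ) (hs : QG.IsSimpleComod k G ρ)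
    (T : X →ₗ[k] X) (hT : QG.IsComodHom k G ρ ρ T) :
    ∃ c : k, T = c • LinearMap.id := by
  haveI hFD : FiniteDimensional k X := finiteDimensional_of_simple hc hs
  obtain ⟨v₀, hv₀⟩ := exists_ne_zero hs
  haveI : Nontrivial X := nontrivial_of_ne v₀ 0 hv₀
  obtain ⟨c, hcEig⟩ := Module.End.exists_eigenvalue (T : Module.End k X)
  obtain ⟨v, hv⟩ := hcEig.exists_hasEigenvector
  refine ⟨c, ?_⟩
  set S : X →ₗ[k] X := T - c • LinearMap.id with hSdef
  have hS : QG.IsComodHom k G ρ ρ S := by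
    unfold QG.IsComodHom at hT ⊢
    ext v'
    have h1 : ρ (T v') = T.rTensor G (ρ v') := LinearMap.congr_fun hT v'
    simp only [LinearMap.comp_apply, hSdef, LinearMap.sub_apply, LinearMap.smul_apply,
      LinearMap.id_apply, map_sub, map_smul, LinearMap.rTensor_sub, LinearMap.rTensor_smul,
      LinearMap.rTensor_id, h1]
  have hker : QG.IsSubcomod k G ρ (LinearMap.ker S) := isSubcomod_ker hS
  rcases hs.2.2 _ le_top hker with h | h
  · exfalso
    have hvker : v ∈ LinearMap.ker S := by
      rw [LinearMap.mem_ker, hSdef]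
      simp [hv.apply_eq_smul]
    rw [h, Submodule.mem_bot] at hvker
    exact hv.2 hvker
  · have hS0 : S = 0 := LinearMap.ker_eq_top.1 h
    have := sub_eq_zero.1 (hSdef ▸ hS0)
    exact this

lemma central_char_unique (hs : QG.IsSimpleComod k G ρ) {Z : Type u} [AddCommGroup Z]
    [Module k Z] (ζ : G →ₗ[k] Z) {g g' : Z}
    (h : ∀ v : X, ζ.lTensor X (ρ v) = v ⊗ₜ[k] g)
    (h' : ∀ v : X, ζ.lTensor X (ρ v) = v ⊗ₜ[k] g') : g = g' := by
  obtain ⟨v₀, hv₀⟩ := exists_ne_zero hs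
  exact tmul_left_cancel hv₀ ((h v₀).symm.trans (h' v₀))

lemma exists_central_char [IsAlgClosed k] {Z : Type u} [AddCommGroup Z] [Module k Z]
    [Coalgebra k Z] (ζ : G →ₗ[k] Z)
    (hε : Coalgebra.counit (R := k) (A := Z) ∘ₗ ζ = Coalgebra.counit (R := k) (A := G))
    (hΔ : TensorProduct.map ζ ζ ∘ₗ Coalgebra.comul (R := k) (A := G)
        = Coalgebra.comul (R := k) (A := Z) ∘ₗ ζ)
    (hcent : QG.IsCentralMap k G ζ)
    (hc : QG.IsComod k G ρ) (hs : QG.IsSimpleComod k G ρ) :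
    ∃ g : Z, QG.IsGroupLike k Z g ∧ ∀ v : X, ζ.lTensor X (ρ v) = v ⊗ₜ[k] g := by
  obtain ⟨v₀, hv₀⟩ := exists_ne_zero hs
  have hcent' : ∀ (ψ : Z →ₗ[k] k) (x : G),
      ctrR (ψ ∘ₗ ζ) (Coalgebra.comul (R := k) x)
        = ctrL (ψ ∘ₗ ζ) (Coalgebra.comul (R := k) x) := by
    intro ψ x
    have h0 := LinearMap.congr_fun hcent x
    simp only [LinearMap.comp_apply] at h0
    have h1 := congrArg (ctrL ψ) h0
    rw [ctrL_rTensor] at h1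
    have h2 : ctrL ψ ((ζ.rTensor G) ((TensorProduct.comm k G G).toLinearMap
        (Coalgebra.comul (R := k) x)))
        = ctrR (ψ ∘ₗ ζ) (Coalgebra.comul (R := k) x) := by
      rw [ctrL_rTensor]
      exact ctrL_comm _ _
    rw [h2] at h1
    exact h1.symm
  have key : ∀ ψ : Z →ₗ[k] k, ∃ c : k, ∀ v : X, ctrR ψ (ζ.lTensor X (ρ v)) = c • v := by
    intro ψ
    set φ : G →ₗ[k] k := ψ ∘ₗ ζ with hφ
    set T : X →ₗ[k] X := ctrR φ ∘ₗ ρ with hT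
    have hTc : QG.IsComodHom k G ρ ρ T := by
      unfold QG.IsComodHom
      ext v
      simp only [LinearMap.comp_apply]
      have e1 : ρ (T v) = LinearMap.lTensor X
          (ctrR (M := G) φ ∘ₗ Coalgebra.comul (R := k)) (ρ v) := rho_ctrR hc φ v
      have ectr : (ctrR (M := G) φ ∘ₗ Coalgebra.comul (R := k) (A := G))
          = (ctrL (N := G) φ ∘ₗ Coalgebra.comul (R := k) (A := G)) := by
        ext x
        exact hcent' ψ x
      have e3 : (TensorProduct.assoc k X G G) (ρ.rTensor G (ρ v))
          = LinearMap.lTensor X (Coalgebra.comul (R := k)) (ρ v) := by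
        rw [hc.coassoc v]
        exact (TensorProduct.assoc k X G G).apply_symm_apply _
      rw [e1, ectr, LinearMap.lTensor_comp_apply, ← e3, ctrL_lTensor_assoc,
        ← LinearMap.rTensor_comp_apply]
    obtain ⟨c, hcT⟩ := schur_scalar hc hs T hTc
    refine ⟨c, fun v => ?_⟩
    rw [ctrR_lTensor]
    have : T v = (c • LinearMap.id : X →ₗ[k] X) v := by rw [hcT]
    simpa [hT] using this
  choose c hcspec using key
  classical
  set bX := Module.Basis.ofVectorSpace k X with hbX
  obtain ⟨a₀, ha₀⟩ : ∃ a, bX.repr v₀ a ≠ 0 := by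
    by_contra hcc; push_neg at hcc
    apply hv₀
    have h0 : bX.repr v₀ = 0 := Finsupp.ext fun a => hcc a
    have := congrArg bX.repr.symm h0
    simpa using this
  set lam : k := bX.repr v₀ a₀ with hlam
  set g : Z := lam⁻¹ • ctrL (bX.coord a₀) (ζ.lTensor X (ρ v₀)) with hg
  have hψg : ∀ ψ : Z →ₗ[k] k, ψ g = c ψ := by
    intro ψ
    have h1 := congrArg (bX.coord a₀) (hcspec ψ v₀)
    rw [dual_ctrR, map_smul, Module.Basis.coord_apply, ← hlam] at h1
    rw [hg, map_smul, h1]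
    simp only [smul_eq_mul]
    field_simp
  have hτ : ∀ v : X, ζ.lTensor X (ρ v) = v ⊗ₜ[k] g := by
    intro v
    have h0 : ∀ ψ : Z →ₗ[k] k, ctrR ψ (ζ.lTensor X (ρ v) - v ⊗ₜ[k] g) = 0 := by
      intro ψ
      rw [map_sub, hcspec ψ v, ctrR_tmul, hψg ψ, sub_self]
    exact sub_eq_zero.1 (eq_zero_of_forall_ctrR _ h0)
  have hcount : Coalgebra.counit (R := k) (A := Z) g = 1 := by
    have h1 : ctrR (Coalgebra.counit (R := k) (A := Z)) (ζ.lTensor X (ρ v₀)) = v₀ := by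
      rw [ctrR_lTensor, hε]
      exact hc.counit v₀
    rw [hτ v₀, ctrR_tmul] at h1
    by_contra hne
    have h2 : (Coalgebra.counit (R := k) (A := Z) g - 1) • v₀ = 0 := by
      rw [sub_smul, one_smul, h1, sub_self]
    rcases smul_eq_zero.1 h2 with h | h
    · exact hne (sub_eq_zero.1 h)
    · exact hv₀ h
  have hcg : Coalgebra.comul (R := k) g = g ⊗ₜ[k] g := by
    have e1 : (Coalgebra.comul (R := k) (A := Z)).lTensor X (ζ.lTensor X (ρ v₀))
        = v₀ ⊗ₜ[k] (Coalgebra.comul (R := k) g) := by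
      rw [hτ v₀, LinearMap.lTensor_tmul]
    have e4 : (ζ.lTensor (X ⊗[k] G)) ((ρ.rTensor G) (ρ v₀)) = (ρ v₀) ⊗ₜ[k] g := by
      rw [← LinearMap.comp_apply, LinearMap.lTensor_comp_rTensor,
        ← LinearMap.rTensor_comp_lTensor, LinearMap.comp_apply, hτ v₀,
        LinearMap.rTensor_tmul]
    have e3 : (Coalgebra.comul (R := k) (A := G)).lTensor X (ρ v₀)
        = TensorProduct.assoc k X G G (ρ.rTensor G (ρ v₀)) := by
      rw [hc.coassoc v₀]
      exact ((TensorProduct.assoc k X G G).apply_symm_apply _).symm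
    have e2 : (Coalgebra.comul (R := k) (A := Z)).lTensor X (ζ.lTensor X (ρ v₀))
        = v₀ ⊗ₜ[k] (g ⊗ₜ[k] g) := by
      rw [← LinearMap.lTensor_comp_apply, ← hΔ, LinearMap.lTensor_comp_apply, e3,
        map_lTensor_assoc, ← LinearMap.rTensor_comp_lTensor, LinearMap.comp_apply, e4,
        LinearMap.rTensor_tmul, hτ v₀]
      simp [TensorProduct.assoc_tmul]
    exact tmul_left_cancel hv₀ (e1.symm.trans e2)
  exact ⟨g, ⟨hcount, hcg⟩, hτ⟩

end QGAux


set_option maxHeartbeats 2000000 in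
open QG in
/-- Let `H ≤ G` be an embedding of linearly reductive
quantum groups, `Z = Z(G)` the center (largest central Hopf quotient of
`O(G)`) and `ZH = Z(G,H) = Z(G) ∩ H` the relative center (the pushout of
`O(G) → O(Z)` and `O(G) → O(H)`).  If `U, V, W ∈ Ĝ` satisfy
`hom_H(U, V ⊗ W) ≠ 0`, then the central character of `U` agrees with the
product of those of `V` and `W` upon restriction to `Z(G,H)`; consequently
`g_V ↦ (central character of V)|_{Z(G,H)}` defines a group homomorphism
`can : C(G,H) → Ẑ(G,H)` (characters of `Z(G,H)` = group-like elements,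
viewed as units of `O(Z(G,H))`). -/
theorem statement_14 (k : Type u) [Field k] [IsAlgClosed k]
    (G Hh : Type u) [Ring G] [HopfAlgebra k G] [Ring Hh] [HopfAlgebra k Hh]
    (π : G →ₐc[k] Hh) (hsurj : Function.Surjective π)
    (hcssG : IsCosemisimple k G) (hcssH : IsCosemisimple k Hh)
    (Z : Type u) [Ring Z] [HopfAlgebra k Z]
    (ζ : G →ₐc[k] Z) (hζsurj : Function.Surjective ζ)
    (hζcentral : IsCentralMap k G (ζ : G →ₗ[k] Z))
    (hζlargest : ∀ (Z' : Type u) [Ring Z'] [HopfAlgebra k Z'] (ζ' : G →ₐc[k] Z'),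
      Function.Surjective ζ' → IsCentralMap k G (ζ' : G →ₗ[k] Z') →
      ∃ t : Z →ₐc[k] Z', t.comp ζ = ζ')
    (ZH : Type u) [Ring ZH] [HopfAlgebra k ZH]
    (α : Z →ₐc[k] ZH) (β : Hh →ₐc[k] ZH)
    (hαsurj : Function.Surjective α) (hβsurj : Function.Surjective β)
    (hcomm : α.comp ζ = β.comp π)
    (hpushout : ∀ (W : Type u) [Ring W] [HopfAlgebra k W]
      (α' : Z →ₐc[k] W) (β' : Hh →ₐc[k] W), α'.comp ζ = β'.comp π →
      ∃! t : ZH →ₐc[k] W, t.comp α = α' ∧ t.comp β = β') :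
    (∀ (U V W : SimpleComodule k G) (gU gV gW : Z),
      IsGroupLike k Z gU → IsGroupLike k Z gV → IsGroupLike k Z gW →
      HasCentralChar k G (ζ : G →ₗ[k] Z) U gU →
      HasCentralChar k G (ζ : G →ₗ[k] Z) V gV →
      HasCentralChar k G (ζ : G →ₗ[k] Z) W gW →
      (∃ f : U.V →ₗ[k] V.V ⊗[k] W.V, f ≠ 0 ∧
        IsComodHom k Hh (cores k G (π : G →ₗ[k] Hh) U.ρ)
          (cores k G (π : G →ₗ[k] Hh) (tensorCoact k G V.ρ W.ρ)) f) →
      α gU = α gV * α gW) ∧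
    (∀ X : SimpleComodule k G, ∃ g : Z,
      IsGroupLike k Z g ∧ HasCentralChar k G (ζ : G →ₗ[k] Z) X g) ∧
    (∃ can : ChainGroup k G Hh π →* ZHˣ,
      ∀ (x : SimpleComodQuot k G) (X : SimpleComodule k G), X.cls = x →
        ∀ g : Z, IsGroupLike k Z g → HasCentralChar k G (ζ : G →ₗ[k] Z) X g →
          ((can (chainGen k G Hh π x) : ZHˣ) : ZH) = α g) := by
  classical
  set ζL : G →ₗ[k] Z := (ζ : G →ₗ[k] Z) with hζL
  set αL : Z →ₗ[k] ZH := (α : Z →ₗ[k] ZH) with hαL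
  set βL : Hh →ₗ[k] ZH := (β : Hh →ₗ[k] ZH) with hβL
  set πL : G →ₗ[k] Hh := (π : G →ₗ[k] Hh) with hπL
  have hζε : Coalgebra.counit (R := k) (A := Z) ∘ₗ ζL = Coalgebra.counit (R := k) (A := G) :=
    CoalgHomClass.counit_comp ζ
  have hζΔ : TensorProduct.map ζL ζL ∘ₗ Coalgebra.comul (R := k) (A := G)
      = Coalgebra.comul (R := k) (A := Z) ∘ₗ ζL := CoalgHomClass.map_comp_comul ζ
  have part2 : ∀ X : SimpleComodule k G, ∃ g : Z,
      IsGroupLike k Z g ∧ HasCentralChar k G (ζ : G →ₗ[k] Z) X g := by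
    intro X
    obtain ⟨g, hgl, hgc⟩ := QGAux.exists_central_char (ρ := X.ρ) ζL hζε hζΔ
      hζcentral X.isComod X.isSimple
    exact ⟨g, hgl, fun v => hgc v⟩
  set θ : G →ₗ[k] ZH := βL ∘ₗ πL with hθ
  have hθζ : θ = αL ∘ₗ ζL := by
    ext x
    have h0 : (α.comp ζ) x = (β.comp π) x := by rw [hcomm]
    exact h0.symm
  have hθmul : ∀ x y : G, θ (x * y) = θ x * θ y := by
    intro x y
    simp [hθ, LinearMap.comp_apply, hβL, hπL, map_mul]
  have part1 : ∀ (U V W : SimpleComodule k G) (gU gV gW : Z),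
      IsGroupLike k Z gU → IsGroupLike k Z gV → IsGroupLike k Z gW →
      HasCentralChar k G (ζ : G →ₗ[k] Z) U gU →
      HasCentralChar k G (ζ : G →ₗ[k] Z) V gV →
      HasCentralChar k G (ζ : G →ₗ[k] Z) W gW →
      (∃ f : U.V →ₗ[k] V.V ⊗[k] W.V, f ≠ 0 ∧
        IsComodHom k Hh (cores k G (π : G →ₗ[k] Hh) U.ρ)
          (cores k G (π : G →ₗ[k] Hh) (tensorCoact k G V.ρ W.ρ)) f) →
      α gU = α gV * α gW := by
    rintro U V W gU gV gW _ _ _ hU hV hW ⟨f, hf0, hf⟩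
    obtain ⟨u, hu⟩ : ∃ u, f u ≠ 0 := by
      by_contra hcc; push_neg at hcc
      exact hf0 (LinearMap.ext fun u => by rw [hcc u, LinearMap.zero_apply])
    have h1 := LinearMap.congr_fun hf u
    simp only [LinearMap.comp_apply] at h1
    have h2 := congrArg (βL.lTensor (V.V ⊗[k] W.V)) h1
    have hRHS : βL.lTensor (V.V ⊗[k] W.V)
        (f.rTensor Hh (cores k G (π : G →ₗ[k] Hh) U.ρ u)) = f u ⊗ₜ[k] (α gU) := by
      rw [← LinearMap.comp_apply (βL.lTensor _),
        LinearMap.lTensor_comp_rTensor, ← LinearMap.rTensor_comp_lTensor,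
        LinearMap.comp_apply]
      have hcor : βL.lTensor U.V (cores k G (π : G →ₗ[k] Hh) U.ρ u) = u ⊗ₜ[k] (α gU) := by
        show βL.lTensor U.V (πL.lTensor U.V (U.ρ u)) = _
        rw [← LinearMap.lTensor_comp_apply, ← hθ, hθζ, LinearMap.lTensor_comp_apply,
          show ζL.lTensor U.V (U.ρ u) = u ⊗ₜ[k] gU from hU u, LinearMap.lTensor_tmul]
        rfl
      rw [hcor, LinearMap.rTensor_tmul]
    have hbil : ∀ (a : V.V ⊗[k] G) (b : W.V ⊗[k] G),
        θ.lTensor (V.V ⊗[k] W.V) ((LinearMap.mul' k G).lTensor (V.V ⊗[k] W.V)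
          ((TensorProduct.tensorTensorTensorComm k V.V G W.V G).toLinearMap (a ⊗ₜ[k] b)))
        = (LinearMap.mul' k ZH).lTensor (V.V ⊗[k] W.V)
            ((TensorProduct.tensorTensorTensorComm k V.V ZH W.V ZH).toLinearMap
              ((θ.lTensor V.V a) ⊗ₜ[k] (θ.lTensor W.V b))) := by
      intro a b
      induction a with
      | zero => simp [TensorProduct.zero_tmul]
      | add a1 a2 h1' h2' => simp only [TensorProduct.add_tmul, map_add, h1', h2']
      | tmul v' g' =>
        induction b with
        | zero => simp [TensorProduct.tmul_zero]
        | add b1 b2 h1' h2' => simp only [TensorProduct.tmul_add, map_add, h1', h2']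
        | tmul w' h' =>
          simp only [LinearEquiv.coe_toLinearMap,
            TensorProduct.tensorTensorTensorComm_tmul, LinearMap.lTensor_tmul,
            LinearMap.mul'_apply, hθmul g' h']
    have hLHS : ∀ t : V.V ⊗[k] W.V, βL.lTensor (V.V ⊗[k] W.V)
        (cores k G (π : G →ₗ[k] Hh) (tensorCoact k G V.ρ W.ρ) t)
        = t ⊗ₜ[k] (α gV * α gW) := by
      intro t
      induction t with
      | zero => simp
      | add x y hx hy => rw [map_add, map_add, hx, hy, TensorProduct.add_tmul]
      | tmul v w =>
        show βL.lTensor _ (πL.lTensor _ (tensorCoact k G V.ρ W.ρ (v ⊗ₜ[k] w))) = _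
        rw [← LinearMap.lTensor_comp_apply, ← hθ]
        show θ.lTensor _ (((LinearMap.mul' k G).lTensor _)
          ((TensorProduct.tensorTensorTensorComm k V.V G W.V G).toLinearMap
            (TensorProduct.map V.ρ W.ρ (v ⊗ₜ[k] w)))) = _
        rw [TensorProduct.map_tmul, hbil (V.ρ v) (W.ρ w)]
        have hv' : θ.lTensor V.V (V.ρ v) = v ⊗ₜ[k] (α gV) := by
          rw [hθζ, LinearMap.lTensor_comp_apply,
            show ζL.lTensor V.V (V.ρ v) = v ⊗ₜ[k] gV from hV v, LinearMap.lTensor_tmul]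
          rfl
        have hw' : θ.lTensor W.V (W.ρ w) = w ⊗ₜ[k] (α gW) := by
          rw [hθζ, LinearMap.lTensor_comp_apply,
            show ζL.lTensor W.V (W.ρ w) = w ⊗ₜ[k] gW from hW w, LinearMap.lTensor_tmul]
          rfl
        rw [hv', hw']
        simp only [LinearEquiv.coe_toLinearMap, TensorProduct.tensorTensorTensorComm_tmul,
          LinearMap.lTensor_tmul, LinearMap.mul'_apply]
    rw [hLHS (f u), hRHS] at h2
    exact (QGAux.tmul_left_cancel hu h2).symm
  refine ⟨part1, part2, ?_⟩
  set gch : SimpleComodule k G → Z := fun X => (part2 X).choose with hgchdef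
  have hgch : ∀ X, IsGroupLike k Z (gch X) ∧
      HasCentralChar k G (ζ : G →ₗ[k] Z) X (gch X) := fun X => (part2 X).choose_spec
  have hα_gl : ∀ g : Z, IsGroupLike k Z g → IsGroupLike k ZH (α g) := by
    intro g hg
    constructor
    · rw [CoalgHomClass.counit_comp_apply α g]
      exact hg.1
    · have h0 := CoalgHomClass.map_comp_comul_apply α g
      rw [hg.2, TensorProduct.map_tmul] at h0
      exact h0.symm
  have hunit : ∀ h : ZH, IsGroupLike k ZH h →
      (h * HopfAlgebra.antipode (R := k) h = 1 ∧ HopfAlgebra.antipode (R := k) h * h = 1) := by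
    intro h hh
    have h1 := HopfAlgebra.mul_antipode_lTensor_comul_apply (R := k) (A := ZH) h
    have h2 := HopfAlgebra.mul_antipode_rTensor_comul_apply (R := k) (A := ZH) h
    rw [hh.2] at h1 h2
    rw [LinearMap.lTensor_tmul, LinearMap.mul'_apply, hh.1, map_one] at h1
    rw [LinearMap.rTensor_tmul, LinearMap.mul'_apply, hh.1, map_one] at h2
    exact ⟨h1, h2⟩
  set F0 : SimpleComodule k G → ZHˣ := fun X =>
    ⟨α (gch X), HopfAlgebra.antipode (R := k) (α (gch X)),
      (hunit _ (hα_gl _ (hgch X).1)).1, (hunit _ (hα_gl _ (hgch X).1)).2⟩ with hF0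
  have htrans : ∀ X Y : SimpleComodule k G, comodIsoRel k G X Y → gch X = gch Y := by
    rintro X Y ⟨e, he⟩
    have hY : ∀ w : Y.V, ζL.lTensor Y.V (Y.ρ w) = w ⊗ₜ[k] gch X := by
      intro w
      have hv : ζL.lTensor X.V (X.ρ (e.symm w)) = (e.symm w) ⊗ₜ[k] gch X :=
        (hgch X).2 (e.symm w)
      have h1 : Y.ρ w = (e.toLinearMap.rTensor G) (X.ρ (e.symm w)) := by
        have h0 := LinearMap.congr_fun he (e.symm w)
        simp only [LinearMap.comp_apply, LinearEquiv.coe_coe,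
          LinearEquiv.apply_symm_apply] at h0
        exact h0
      rw [h1, ← LinearMap.comp_apply, LinearMap.lTensor_comp_rTensor,
        ← LinearMap.rTensor_comp_lTensor, LinearMap.comp_apply, hv,
        LinearMap.rTensor_tmul]
      simp
    exact QGAux.central_char_unique Y.isSimple ζL hY (fun v => (hgch Y).2 v)
  set F : SimpleComodQuot k G → ZHˣ :=
    Quot.lift F0 (fun X Y hXY => Units.ext (show α (gch X) = α (gch Y) by
      rw [htrans X Y hXY])) with hF
  have hrels : ∀ r ∈ chainRels k G Hh π, FreeGroup.lift F r = 1 := by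
    rintro r ⟨U, V, W, hhom, rfl⟩
    rw [map_mul, map_inv, map_mul, FreeGroup.lift_apply_of, FreeGroup.lift_apply_of, FreeGroup.lift_apply_of,
      mul_inv_eq_one]
    apply Units.ext
    rw [Units.val_mul]
    simp only [hF, hF0, SimpleComodule.cls]
    exact part1 U V W (gch U) (gch V) (gch W) (hgch U).1 (hgch V).1 (hgch W).1
      (hgch U).2 (hgch V).2 (hgch W).2 hhom
  refine ⟨PresentedGroup.toGroup hrels, ?_⟩
  intro x X hX g hgl hcc
  rw [← hX]
  show ((PresentedGroup.toGroup hrels (PresentedGroup.of X.cls) : ZHˣ) : ZH) = α g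
  rw [PresentedGroup.toGroup.of]
  simp only [hF, hF0, SimpleComodule.cls]
  show α (gch X) = α g
  rw [QGAux.central_char_unique X.isSimple ζL (fun v => (hgch X).2 v) (fun v => hcc v)]
end
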